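/- Let u be a solution to the obstacle problem min{∫_Ω F(x,z,Dz) dx : z ∈ K_ψ(Ω)}, where F is a Carathéodory function, (s,ξ) ↦ F(x,s,ξ) is convex, and c₁|ξ|^p ≤ F(x,s,ξ) ≤ c₂(1 + |s|^γ + |ξ|^q). Fix a ball B_{R_0} ⋐ Ω, radii R_0/2 ≤ s < t ≤ R_0, a cutoff η ∈ C_0^∞(B_t) with 0 ≤ η ≤ 1 and η = 1 on B_s, σ > q, and k ≥ max{sup_{B_{R_0}} ψ, 1}. Set u_k := (u−k)_+ and A_{k,r} := {x ∈ B_r : u > k}. Then ∫_{A_{k,s}} F(x,u,Du) dx ≤ ∫_{A_{k,t}∖A_{k,s}} F(x,u,Du) dx + C k^q |A_{k,R_0}| + C ∫_{A_{k,t}} |Dη|^q (u−k)^q dx, for a constant C = C(c₂, q, σ). -/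

import Mathlib

open MeasureTheory Metric Set

noncomputable section CaccAux

/-- slope of the Lipschitz truncation -/
def gAux (κ ε r : ℝ) : ℝ := max 0 (min ((r - κ) / ε) 1)

/-- truncation of the identity: primitive of `gAux` -/
def θAux (κ ε r : ℝ) : ℝ := ∫ x in κ..r, gAux κ ε x

namespace CaccAux

variable {κ ε r : ℝ}

lemma g_cont : Continuous (gAux κ ε) := by
  unfold gAux; fun_prop

lemma g_nonneg (r : ℝ) : 0 ≤ gAux κ ε r := le_max_left _ _

lemma g_le_one (r : ℝ) : gAux κ ε r ≤ 1 :=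
  max_le zero_le_one (min_le_right _ _)

lemma g_mono (hε : 0 < ε) : Monotone (gAux κ ε) := by
  intro a b hab
  exact max_le_max le_rfl (min_le_min (by gcongr) le_rfl)

lemma g_zero (hε : 0 < ε) (h : r ≤ κ) : gAux κ ε r = 0 := by
  have h1 : (r - κ) / ε ≤ 0 := div_nonpos_iff.2 (Or.inr ⟨by linarith, hε.le⟩)
  have : min ((r - κ) / ε) 1 ≤ 0 := le_trans (min_le_left _ _) h1
  exact max_eq_left this

lemma g_one (hε : 0 < ε) (h : κ + ε ≤ r) : gAux κ ε r = 1 := by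
  have h1 : (1 : ℝ) ≤ (r - κ) / ε := (one_le_div hε).2 (by linarith)
  rw [gAux, min_eq_right h1, max_eq_right zero_le_one]

lemma g_pos (hε : 0 < ε) (h : κ < r) : 0 < gAux κ ε r := by
  have h1 : 0 < min ((r - κ) / ε) 1 := lt_min (div_pos (by linarith) hε) one_pos
  exact lt_of_lt_of_le h1 (le_max_right _ _)

lemma le_of_g_eq_zero (hε : 0 < ε) (h : gAux κ ε r = 0) : r ≤ κ := by
  by_contra hc
  exact absurd h (ne_of_gt (g_pos hε (not_le.1 hc)))

lemma lt_of_g_pos (hε : 0 < ε) (h : 0 < gAux κ ε r) : κ < r := by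
  by_contra hc
  rw [g_zero hε (not_lt.1 hc)] at h
  exact lt_irrefl 0 h

lemma g_intFn (a b : ℝ) : IntervalIntegrable (gAux κ ε) volume a b :=
  g_cont.intervalIntegrable a b

lemma θ_hasDeriv (r : ℝ) : HasDerivAt (θAux κ ε) (gAux κ ε r) r :=
  intervalIntegral.integral_hasDerivAt_right (g_intFn κ r)
    (g_cont.stronglyMeasurableAtFilter _ _) g_cont.continuousAt

lemma θ_cont : Continuous (θAux κ ε) := by
  have : Differentiable ℝ (θAux κ ε) := fun r => (θ_hasDeriv r).differentiableAt
  exact this.continuous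

lemma θ_zero (hε : 0 < ε) (h : r ≤ κ) : θAux κ ε r = 0 := by
  rw [θAux, intervalIntegral.integral_symm]
  have : EqOn (gAux κ ε) 0 (uIcc r κ) := by
    intro x hx
    rw [uIcc_of_le h] at hx
    exact g_zero hε hx.2
  rw [intervalIntegral.integral_congr this]
  simp

lemma θ_nonneg (hε : 0 < ε) (r : ℝ) : 0 ≤ θAux κ ε r := by
  rcases le_total r κ with h | h
  · rw [θ_zero hε h]
  · exact intervalIntegral.integral_nonneg h (fun x _ => g_nonneg x)

lemma θ_le (hε : 0 < ε) (h : κ ≤ r) : θAux κ ε r ≤ gAux κ ε r * (r - κ) := by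
  have := intervalIntegral.integral_mono_on (μ := volume) h (g_intFn κ r)
    (intervalIntegrable_const (c := gAux κ ε r))
    (fun x hx => g_mono hε hx.2)
  rw [intervalIntegral.integral_const] at this
  calc θAux κ ε r ≤ (r - κ) • gAux κ ε r := this
  _ = gAux κ ε r * (r - κ) := by rw [smul_eq_mul]; ring

lemma θ_le' (hε : 0 < ε) (r : ℝ) : θAux κ ε r ≤ max (r - κ) 0 := by
  rcases le_total r κ with h | h
  · rw [θ_zero hε h]; exact le_max_right _ _
  · refine le_trans (θ_le hε h) (le_trans ?_ (le_max_left _ _))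
    have := g_le_one (κ := κ) (ε := ε) r
    nlinarith [g_nonneg (κ := κ) (ε := ε) r]

lemma θ_ge (hε : 0 < ε) (h : κ + ε ≤ r) : r - κ - ε ≤ θAux κ ε r := by
  have hsplit := intervalIntegral.integral_add_adjacent_intervals
    (g_intFn (κ := κ) (ε := ε) κ (κ + ε)) (g_intFn (κ := κ) (ε := ε) (κ + ε) r)
  have h1 : 0 ≤ ∫ x in κ..(κ + ε), gAux κ ε x :=
    intervalIntegral.integral_nonneg (by linarith) (fun x _ => g_nonneg x)
  have h2 : (∫ x in (κ + ε)..r, gAux κ ε x) = r - (κ + ε) := by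
    have : EqOn (gAux κ ε) (fun _ => (1:ℝ)) (uIcc (κ + ε) r) := by
      intro x hx
      rw [uIcc_of_le h] at hx
      exact g_one hε hx.1
    rw [intervalIntegral.integral_congr this, intervalIntegral.integral_const]
    simp
  have : θAux κ ε r = (∫ x in κ..(κ + ε), gAux κ ε x) + (r - (κ + ε)) := by
    rw [θAux, ← hsplit, h2]
  rw [this]; linarith

lemma θ_pos_imp (hε : 0 < ε) (h : 0 < θAux κ ε r) : κ < r := by
  by_contra hc
  rw [θ_zero hε (not_lt.1 hc)] at h
  exact lt_irrefl 0 h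

end CaccAux

end CaccAux

set_option maxHeartbeats 1000000

/-- First step in the Caccioppoli inequality: comparison with the test function
`φ = u - η^σ (u-k)_+` on the superlevel sets. -/
theorem stmt12 (n : ℕ) (hn : 2 ≤ n)
    (Ω : Set (EuclideanSpace ℝ (Fin n))) (hΩo : IsOpen Ω) (hΩb : Bornology.IsBounded Ω)
    (p q γ c₁ c₂ : ℝ) (hp : 1 ≤ p) (hpq : p ≤ q) (hγ : 0 ≤ γ)
    (hc₁ : 0 < c₁) (hc₂ : 0 < c₂)
    (F : EuclideanSpace ℝ (Fin n) → ℝ → EuclideanSpace ℝ (Fin n) → ℝ)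
    (hFmeas : ∀ s ξ, Measurable fun x => F x s ξ)
    (hFcont : ∀ x, Continuous fun sξ : ℝ × EuclideanSpace ℝ (Fin n) => F x sξ.1 sξ.2)
    (hFconv : ∀ x, ConvexOn ℝ Set.univ
      (fun sξ : ℝ × EuclideanSpace ℝ (Fin n) => F x sξ.1 sξ.2))
    (hFgrowth : ∀ x s ξ, c₁ * ‖ξ‖ ^ p ≤ F x s ξ ∧ F x s ξ ≤ c₂ * (1 + |s| ^ γ + ‖ξ‖ ^ q))
    (ψ u : EuclideanSpace ℝ (Fin n) → ℝ)
    (hψ : ∀ K : Set (EuclideanSpace ℝ (Fin n)), IsCompact K → K ⊆ Ω →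
      ∃ M : ℝ, ∀ x ∈ K, |ψ x| ≤ M)
    (hu : Differentiable ℝ u)
    (huW : IntegrableOn (fun x => |u x| ^ p + ‖gradient u x‖ ^ p) Ω)
    (hFint : IntegrableOn (fun x => F x (u x) (gradient u x)) Ω)
    (huψ : ∀ᵐ x ∂(volume.restrict Ω), ψ x ≤ u x)
    (hmin : ∀ φ : EuclideanSpace ℝ (Fin n) → ℝ, Differentiable ℝ φ →
      (∀ᵐ x ∂(volume.restrict Ω), ψ x ≤ φ x) →
      IsCompact (tsupport (fun x => φ x - u x)) →
      tsupport (fun x => φ x - u x) ⊆ Ω →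
      (∫ x in tsupport (fun x => φ x - u x), F x (u x) (gradient u x)) ≤
        ∫ x in tsupport (fun x => φ x - u x), F x (φ x) (gradient φ x))
    (x₀ : EuclideanSpace ℝ (Fin n)) (R₀ : ℝ) (hR₀ : 0 < R₀)
    (hball : closedBall x₀ R₀ ⊆ Ω) (σ : ℝ) (hσ : q < σ) :
    ∃ C : ℝ, 0 < C ∧
      ∀ s t : ℝ, R₀ / 2 ≤ s → s < t → t ≤ R₀ →
      ∀ η : EuclideanSpace ℝ (Fin n) → ℝ, ContDiff ℝ (⊤ : ℕ∞) η → HasCompactSupport η →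
        tsupport η ⊆ ball x₀ t → (∀ x, η x ∈ Set.Icc (0 : ℝ) 1) →
        (∀ x ∈ ball x₀ s, η x = 1) →
      ∀ k : ℝ, 1 ≤ k → (∀ x ∈ ball x₀ R₀, ψ x ≤ k) →
        (∫ x in {x | x ∈ ball x₀ s ∧ k < u x}, F x (u x) (gradient u x)) ≤
          (∫ x in {x | x ∈ ball x₀ t ∧ k < u x} \ {x | x ∈ ball x₀ s ∧ k < u x},
              F x (u x) (gradient u x)) +
            C * k ^ q * (volume {x | x ∈ ball x₀ R₀ ∧ k < u x}).toReal +
            C * ∫ x in {x | x ∈ ball x₀ t ∧ k < u x},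
                  ‖fderiv ℝ η x‖ ^ q * (u x - k) ^ q := by
  classical
  have hq1 : (1:ℝ) ≤ q := le_trans hp hpq
  have hq0 : (0:ℝ) ≤ q := by linarith
  -- the natural exponent we use for the cutoff power
  obtain ⟨m, hm⟩ : ∃ m : ℕ, m = ⌈q⌉₊ + 1 := ⟨_, rfl⟩
  have hm0 : m ≠ 0 := by rw [hm]; exact Nat.succ_ne_zero _
  have hmc : (0:ℕ) < ⌈q⌉₊ := Nat.ceil_pos.mpr (by linarith)
  have hm10 : m - 1 ≠ 0 := by omega
  have hqm : q ≤ (m : ℝ) := by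
    have h1 := Nat.le_ceil q
    have h2 : ((⌈q⌉₊ : ℕ) : ℝ) ≤ (m : ℝ) := by rw [hm]; exact_mod_cast Nat.le_succ _
    linarith
  -- supremum of u on the closed ball
  obtain ⟨z, hzmem, hzmax⟩ := (isCompact_closedBall x₀ R₀).exists_isMaxOn
    ⟨x₀, mem_closedBall_self hR₀.le⟩ hu.continuous.continuousOn
  obtain ⟨M, hM⟩ : ∃ M : ℝ, M = max (u z) 1 := ⟨_, rfl⟩
  have hM1 : (1:ℝ) ≤ M := by rw [hM]; exact le_max_right _ _
  have hMu : ∀ x ∈ closedBall x₀ R₀, u x ≤ M := fun x hx =>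
    le_trans (hzmax hx) (by rw [hM]; exact le_max_left _ _)
  have hMγ : (0:ℝ) ≤ M ^ γ := Real.rpow_nonneg (by linarith) γ
  have hmq0 : (0:ℝ) ≤ (m:ℝ) ^ q := Real.rpow_nonneg (by positivity) q
  have hC1 : (0:ℝ) ≤ c₂ * (1 + M ^ γ) := mul_nonneg hc₂.le (by linarith)
  have hC2 : (0:ℝ) ≤ c₂ * (m:ℝ) ^ q := mul_nonneg hc₂.le hmq0
  refine ⟨c₂ * (1 + M ^ γ) + c₂ * (m:ℝ) ^ q + 1, by linarith, ?_⟩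
  intro s t hs hst htR η hηsm hηcs hηsupp hη01 hηs k hk hψk
  set f₀ : EuclideanSpace ℝ (Fin n) → ℝ := fun x => F x (u x) (gradient u x) with hf₀
  have hf₀nonneg : ∀ x, 0 ≤ f₀ x := fun x =>
    le_trans (mul_nonneg hc₁.le (Real.rpow_nonneg (norm_nonneg _) p))
      (hFgrowth x (u x) (gradient u x)).1
  have hucont : Continuous u := hu.continuous
  have hηcont : Continuous η := hηsm.continuous
  have hηd : Differentiable ℝ η := hηsm.differentiable (by simp)
  have hηfc : Continuous (fderiv ℝ η) := hηsm.continuous_fderiv (by simp)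
  have hballtR : ball x₀ t ⊆ ball x₀ R₀ := ball_subset_ball htR
  have hballΩ : ball x₀ R₀ ⊆ Ω := le_trans ball_subset_closedBall hball
  have hstR : s ≤ R₀ := le_trans hst.le htR
  -- the superlevel sets
  have hopen : ∀ r c : ℝ, IsOpen {x : EuclideanSpace ℝ (Fin n) | x ∈ ball x₀ r ∧ c < u x} :=
    fun r c => IsOpen.inter isOpen_ball (isOpen_lt continuous_const hucont)
  have hAmeas : ∀ r c : ℝ,
      MeasurableSet {x : EuclideanSpace ℝ (Fin n) | x ∈ ball x₀ r ∧ c < u x} :=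
    fun r c => (hopen r c).measurableSet
  set As := {x | x ∈ ball x₀ s ∧ k < u x} with hAs
  set At := {x | x ∈ ball x₀ t ∧ k < u x} with hAt
  set AR := {x | x ∈ ball x₀ R₀ ∧ k < u x} with hAR
  have hARvol : volume AR < ⊤ :=
    lt_of_le_of_lt (measure_mono (fun x hx => hx.1)) measure_ball_lt_top
  set V := (volume AR).toReal with hV
  have hV0 : 0 ≤ V := ENNReal.toReal_nonneg
  -- the gradient-of-cutoff weight
  set g₂ : EuclideanSpace ℝ (Fin n) → ℝ :=
    fun x => ‖fderiv ℝ η x‖ ^ q * (max (u x - k) 0) ^ q with hg₂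
  have hg₂cont : Continuous g₂ := by
    apply Continuous.mul
    · exact (hηfc.norm).rpow_const (fun x => Or.inr hq0)
    · exact ((hucont.sub continuous_const).max continuous_const).rpow_const
        (fun x => Or.inr hq0)
  have hg₂nonneg : ∀ x, 0 ≤ g₂ x := fun x =>
    mul_nonneg (Real.rpow_nonneg (norm_nonneg _) q) (Real.rpow_nonneg (le_max_right _ _) q)
  set I := ∫ x in At, ‖fderiv ℝ η x‖ ^ q * (u x - k) ^ q with hI
  have hIg₂ : (∫ x in At, g₂ x) = I := by
    apply setIntegral_congr_fun (hAmeas t k)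
    intro x hx
    have hmx : max (u x - k) 0 = u x - k := max_eq_left (by linarith [hx.2])
    simp only [hg₂, hmx]
  have hI0 : 0 ≤ I := by
    rw [← hIg₂]
    exact setIntegral_nonneg (hAmeas t k) (fun x _ => hg₂nonneg x)
  have hg₂At : IntegrableOn g₂ At volume :=
    (hg₂cont.continuousOn.integrableOn_compact (isCompact_closedBall x₀ R₀)).mono_set
      (fun x hx => ball_subset_closedBall (hballtR hx.1))
  -- norm of gradient of η
  have hnormη : ∀ x, ‖gradient η x‖ = ‖fderiv ℝ η x‖ := fun x =>
    LinearIsometryEquiv.norm_map _ _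
  -- MAIN STEP: for every ε > 0
  have key : ∀ ε : ℝ, 0 < ε →
      (∫ x in {x | x ∈ ball x₀ s ∧ k + 2*ε < u x}, f₀ x) ≤
        c₂ * (1 + M ^ γ) * V + c₂ * (m:ℝ) ^ q * I := by
    intro ε hε
    obtain ⟨κ, hκ⟩ : ∃ κ : ℝ, κ = k + ε := ⟨_, rfl⟩
    obtain ⟨θ, hθ⟩ : ∃ θ : ℝ → ℝ, θ = θAux κ ε := ⟨_, rfl⟩
    obtain ⟨g, hg⟩ : ∃ g : ℝ → ℝ, g = gAux κ ε := ⟨_, rfl⟩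
    set φ : EuclideanSpace ℝ (Fin n) → ℝ := fun x => u x - (η x)^m * θ (u x) with hφ
    set lam : EuclideanSpace ℝ (Fin n) → ℝ := fun x => (η x)^m * g (u x) with hlam
    have hθd : ∀ r, HasDerivAt θ (g r) r := by
      rw [hθ, hg]; exact fun r => CaccAux.θ_hasDeriv r
    have hgcont : Continuous g := by rw [hg]; exact CaccAux.g_cont
    have hgnn : ∀ r, 0 ≤ g r := by rw [hg]; exact CaccAux.g_nonneg
    have hgle1 : ∀ r, g r ≤ 1 := by rw [hg]; exact CaccAux.g_le_one
    have hgzero : ∀ r, g r = 0 → r ≤ κ := by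
      rw [hg]; exact fun r h => CaccAux.le_of_g_eq_zero hε h
    have hgpos : ∀ r, 0 < g r → κ < r := by
      rw [hg]; exact fun r h => CaccAux.lt_of_g_pos hε h
    have hgone : ∀ r, κ + ε ≤ r → g r = 1 := by
      rw [hg]; exact fun r h => CaccAux.g_one hε h
    have hθzero : ∀ r, r ≤ κ → θ r = 0 := by
      rw [hθ]; exact fun r h => CaccAux.θ_zero hε h
    have hθnn : ∀ r, 0 ≤ θ r := by rw [hθ]; exact CaccAux.θ_nonneg hε
    have hθle : ∀ r, κ ≤ r → θ r ≤ g r * (r - κ) := by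
      rw [hθ, hg]; exact fun r h => CaccAux.θ_le hε h
    have hθle' : ∀ r, θ r ≤ max (r - κ) 0 := by
      rw [hθ]; exact fun r => CaccAux.θ_le' hε r
    have hθge : ∀ r, κ + ε ≤ r → r - κ - ε ≤ θ r := by
      rw [hθ]; exact fun r h => CaccAux.θ_ge hε h
    have hθposimp : ∀ r, 0 < θ r → κ < r := by
      rw [hθ]; exact fun r h => CaccAux.θ_pos_imp hε h
    have hlam01 : ∀ x, 0 ≤ lam x ∧ lam x ≤ 1 := by
      intro x
      have h1 : 0 ≤ (η x)^m := pow_nonneg (hη01 x).1 m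
      have h2 : (η x)^m ≤ 1 := pow_le_one₀ (hη01 x).1 (hη01 x).2
      constructor
      · exact mul_nonneg h1 (hgnn _)
      · calc (η x)^m * g (u x) ≤ 1 * 1 :=
            mul_le_mul h2 (hgle1 _) (hgnn _) zero_le_one
        _ = 1 := by ring
    -- derivative of the test function
    have hφfd : ∀ x, HasFDerivAt φ (fderiv ℝ u x -
        ((η x)^m • (g (u x) • fderiv ℝ u x) +
          θ (u x) • (((m:ℝ) * (η x) ^ (m-1)) • fderiv ℝ η x))) x := by
      intro x
      have h1 : HasFDerivAt (fun y => θ (u y)) (g (u x) • fderiv ℝ u x) x :=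
        (hθd (u x)).comp_hasFDerivAt x (hu x).hasFDerivAt
      have h2 : HasFDerivAt (fun y => (η y)^m) (((m:ℝ) * (η x)^(m-1)) • fderiv ℝ η x) x :=
        (hasDerivAt_pow m (η x)).comp_hasFDerivAt x (hηd x).hasFDerivAt
      exact ((hu x).hasFDerivAt).sub (h2.mul h1)
    have hφdiff : Differentiable ℝ φ := fun x => (hφfd x).differentiableAt
    have hgradφ : ∀ x, gradient φ x = gradient u x -
        ((η x)^m • (g (u x) • gradient u x) +
          θ (u x) • (((m:ℝ) * (η x) ^ (m-1)) • gradient η x)) := by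
      intro x
      unfold gradient
      rw [(hφfd x).fderiv]
      simp only [map_sub, map_add, _root_.map_smul]
    -- the support set
    set S := tsupport (fun x => φ x - u x) with hS
    have hSclosed : IsClosed S := isClosed_tsupport _
    have hSsubη : S ⊆ tsupport η := by
      apply closure_mono
      intro x hx
      simp only [Function.mem_support] at hx ⊢
      intro h0
      apply hx
      simp [hφ, h0, zero_pow hm0]
    have hScompact : IsCompact S := IsCompact.of_isClosed_subset hηcs hSclosed hSsubη
    have hSball : S ⊆ ball x₀ t := hSsubη.trans hηsupp
    have hSΩ : S ⊆ Ω := hSball.trans (hballtR.trans hballΩ)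
    have hSmeas : MeasurableSet S := hSclosed.measurableSet
    -- the obstacle constraint
    have hφψ : ∀ᵐ x ∂(volume.restrict Ω), ψ x ≤ φ x := by
      filter_upwards [huψ] with x hx
      rcases eq_or_ne (η x) 0 with h0 | h0
      · have hphix : φ x = u x := by simp [hφ, h0, zero_pow hm0]
        rw [hphix]; exact hx
      rcases (hθnn (u x)).eq_or_lt with h1 | h1
      · have hθ0 : θ (u x) = 0 := h1.symm
        have hphix : φ x = u x := by simp [hφ, hθ0]
        rw [hphix]; exact hx
      · have hxball : x ∈ ball x₀ R₀ :=
          hballtR (hηsupp (subset_tsupport η (Function.mem_support.2 h0)))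
        have hκu : κ < u x := hθposimp _ h1
        have hθle2 : θ (u x) ≤ u x - κ := by
          have h2 := hθle' (u x)
          rw [max_eq_left (by linarith)] at h2
          exact h2
        have hηm1 : (η x)^m ≤ 1 := pow_le_one₀ (hη01 x).1 (hη01 x).2
        have hηm0 : 0 ≤ (η x)^m := pow_nonneg (hη01 x).1 m
        have h2 : (η x)^m * θ (u x) ≤ θ (u x) := by
          calc (η x)^m * θ (u x) ≤ 1 * θ (u x) :=
              mul_le_mul_of_nonneg_right hηm1 (hθnn _)
          _ = θ (u x) := one_mul _
        have hφge : k ≤ φ x := by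
          simp only [hφ]
          rw [hκ] at hθle2
          linarith
        exact le_trans (hψk x hxball) hφge
    -- pointwise convexity estimate
    have hstar : ∀ x, F x (φ x) (gradient φ x) ≤
        (1 - lam x) * f₀ x + c₂ * (1 + M ^ γ) * lam x + c₂ * (m:ℝ)^q * g₂ x := by
      intro x
      have htriv : lam x = 0 → φ x = u x ∧ gradient φ x = gradient u x := by
        intro hl
        rcases eq_or_ne (η x) 0 with h0 | h0
        · constructor
          · simp [hφ, h0, zero_pow hm0]
          · rw [hgradφ x, h0]
            simp [zero_pow hm0, zero_pow hm10]
        · have hηm : (η x)^m ≠ 0 := pow_ne_zero _ h0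
          have hg0 : g (u x) = 0 := by
            rcases mul_eq_zero.1 hl with h | h
            · exact absurd h hηm
            · exact h
          have hθ0 : θ (u x) = 0 := hθzero _ (hgzero _ hg0)
          constructor
          · simp [hφ, hθ0]
          · rw [hgradφ x, hθ0, hg0]
            simp
      rcases (hlam01 x).1.eq_or_lt with hl0 | hl0
      · obtain ⟨he1, he2⟩ := htriv hl0.symm
        rw [he1, he2, ← hl0]
        have hng : 0 ≤ c₂ * (m:ℝ)^q * g₂ x := mul_nonneg hC2 (hg₂nonneg x)
        simp only [hf₀]
        linarith
      · -- main case : lam x > 0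
        have he0 : 0 < η x := by
          rcases (hη01 x).1.eq_or_lt with h | h
          · exfalso
            simp only [hlam] at hl0
            rw [← h, zero_pow hm0, zero_mul] at hl0
            exact lt_irrefl 0 hl0
          · exact h
        have he1 : η x ≤ 1 := (hη01 x).2
        have hgv : 0 < g (u x) := by
          rcases (hgnn (u x)).eq_or_lt with h | h
          · exfalso
            simp only [hlam] at hl0
            rw [← h, mul_zero] at hl0
            exact lt_irrefl 0 hl0
          · exact h
        have hgv1 : g (u x) ≤ 1 := hgle1 _
        have hκv : κ < u x := hgpos _ hgv
        have hkv : k < u x := by rw [hκ] at hκv; linarith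
        have hxball : x ∈ ball x₀ t :=
          hηsupp (subset_tsupport η (Function.mem_support.2 (ne_of_gt he0)))
        have hvM : u x ≤ M :=
          hMu x (closedBall_subset_closedBall htR (ball_subset_closedBall hxball))
        have hθv0 : 0 ≤ θ (u x) := hθnn (u x)
        have hθle3 : θ (u x) ≤ g (u x) * (u x - κ) := hθle _ hκv.le
        have hL0 : 0 < lam x := hl0
        have hL1 : lam x ≤ 1 := (hlam01 x).2
        set a : ℝ := u x - θ (u x) / g (u x) with ha
        set b : EuclideanSpace ℝ (Fin n) :=
          (-(((m:ℝ) * θ (u x)) / (η x * g (u x)))) • gradient η x with hb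
        have hdiv : θ (u x) / g (u x) ≤ u x - κ := by
          rw [div_le_iff₀ hgv, mul_comm]
          exact hθle3
        have hdiv0 : 0 ≤ θ (u x) / g (u x) := div_nonneg hθv0 hgv.le
        have hka : k ≤ a := by
          have : κ ≤ a := by rw [ha]; linarith
          rw [hκ] at this; linarith
        have haM : a ≤ M := by rw [ha]; linarith
        have ha0 : 0 < a := by linarith
        have haγ : |a| ^ γ ≤ M ^ γ := by
          rw [abs_of_pos ha0]
          exact Real.rpow_le_rpow ha0.le haM hγ
        have hem : (η x) ^ m = (η x) ^ (m-1) * (η x) := by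
          conv_lhs => rw [show m = (m-1)+1 by omega]
          rw [pow_succ]
        -- the convex combination identity
        have hfst : (1 - lam x) * u x + lam x * a = φ x := by
          rw [ha]
          simp only [hlam, hφ]
          field_simp
          ring
        have hsnd : (1 - lam x) • gradient u x + lam x • b = gradient φ x := by
          rw [hgradφ x, hb]
          simp only [hlam]
          rw [hem]
          match_scalars
          · ring
          · field_simp
        have hPQ : (1 - lam x) • ((u x, gradient u x) : ℝ × EuclideanSpace ℝ (Fin n)) +
            lam x • ((a, b) : ℝ × EuclideanSpace ℝ (Fin n)) = (φ x, gradient φ x) := by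
          rw [Prod.smul_mk, Prod.smul_mk, Prod.mk_add_mk, Prod.mk.injEq]
          exact ⟨hfst, hsnd⟩
        have hconv := (hFconv x).2
          (mem_univ ((u x, gradient u x) : ℝ × EuclideanSpace ℝ (Fin n)))
          (mem_univ ((a, b) : ℝ × EuclideanSpace ℝ (Fin n)))
          (by linarith : (0:ℝ) ≤ 1 - lam x) hL0.le (by ring)
        rw [hPQ] at hconv
        simp only [smul_eq_mul] at hconv
        -- growth bound on F x a b
        have hFg : F x a b ≤ c₂ * (1 + |a| ^ γ + ‖b‖ ^ q) := (hFgrowth x a b).2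
        -- bound on lam x * ‖b‖^q
        have hbnorm : ‖b‖ = ((m:ℝ) * θ (u x)) / (η x * g (u x)) * ‖gradient η x‖ := by
          rw [hb, norm_smul, Real.norm_eq_abs, abs_neg, abs_of_nonneg (by positivity)]
        have hb1 : ‖b‖ ≤ (m:ℝ) * (u x - k) / η x * ‖gradient η x‖ := by
          rw [hbnorm]
          apply mul_le_mul_of_nonneg_right _ (norm_nonneg _)
          rw [div_le_div_iff₀ (by positivity) he0]
          have hθk : θ (u x) ≤ g (u x) * (u x - k) := by
            have h9 : g (u x) * (u x - κ) ≤ g (u x) * (u x - k) := by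
              apply mul_le_mul_of_nonneg_left _ hgv.le
              rw [hκ]; linarith
            linarith
          have h10 : ((m:ℝ) * θ (u x)) * η x ≤ ((m:ℝ) * (g (u x) * (u x - k))) * η x := by
            apply mul_le_mul_of_nonneg_right _ he0.le
            exact mul_le_mul_of_nonneg_left hθk (Nat.cast_nonneg m)
          calc ((m:ℝ) * θ (u x)) * η x ≤ ((m:ℝ) * (g (u x) * (u x - k))) * η x := h10
          _ = (m:ℝ) * (u x - k) * (η x * g (u x)) := by ring
        have hbq : lam x * ‖b‖ ^ q ≤ (m:ℝ)^q * g₂ x := by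
          have huk0 : (0:ℝ) ≤ u x - k := by linarith
          have h1 : ‖b‖ ^ q ≤ ((m:ℝ) * (u x - k) / η x * ‖gradient η x‖) ^ q :=
            Real.rpow_le_rpow (norm_nonneg _) hb1 hq0
          have h2 : ((m:ℝ) * (u x - k) / η x * ‖gradient η x‖) ^ q =
              (m:ℝ)^q * (u x - k)^q / (η x)^q * ‖fderiv ℝ η x‖^q := by
            rw [hnormη x, Real.mul_rpow (by positivity) (norm_nonneg _),
              Real.div_rpow (by positivity) he0.le,
              Real.mul_rpow (by positivity) huk0]
          have hLq : lam x ≤ (η x)^q := by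
            rw [hlam]
            calc (η x)^m * g (u x) ≤ (η x)^m * 1 :=
                mul_le_mul_of_nonneg_left hgv1 (pow_nonneg he0.le m)
            _ = (η x)^m := mul_one _
            _ = (η x)^(m:ℝ) := (Real.rpow_natCast (η x) m).symm
            _ ≤ (η x)^q := Real.rpow_le_rpow_of_exponent_ge he0 he1 hqm
          have hg₂x : g₂ x = ‖fderiv ℝ η x‖^q * (u x - k)^q := by
            simp only [hg₂]
            rw [max_eq_left huk0]
          have hq' : 0 < (η x)^q := Real.rpow_pos_of_pos he0 q
          have hineq : lam x * ((η x)^q)⁻¹ ≤ 1 := by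
            rw [mul_inv_le_iff₀ hq', one_mul]
            exact hLq
          have hnn : (0:ℝ) ≤ (m:ℝ)^q * (u x - k)^q * ‖fderiv ℝ η x‖^q := by
            have hn1 := Real.rpow_nonneg huk0 q
            have hn2 := Real.rpow_nonneg (norm_nonneg (fderiv ℝ η x)) q
            positivity
          have h3 : lam x * ((m:ℝ)^q * (u x - k)^q / (η x)^q * ‖fderiv ℝ η x‖^q) ≤
              (m:ℝ)^q * g₂ x := by
            rw [hg₂x, div_eq_mul_inv]
            calc lam x * ((m:ℝ)^q * (u x - k)^q * ((η x)^q)⁻¹ * ‖fderiv ℝ η x‖^q)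
                = (lam x * ((η x)^q)⁻¹) * ((m:ℝ)^q * (u x - k)^q * ‖fderiv ℝ η x‖^q) := by
                  ring
            _ ≤ 1 * ((m:ℝ)^q * (u x - k)^q * ‖fderiv ℝ η x‖^q) :=
                mul_le_mul_of_nonneg_right hineq hnn
            _ = (m:ℝ)^q * (‖fderiv ℝ η x‖^q * (u x - k)^q) := by ring
          calc lam x * ‖b‖ ^ q
              ≤ lam x * ((m:ℝ)^q * (u x - k)^q / (η x)^q * ‖fderiv ℝ η x‖^q) := by
                rw [← h2]
                exact mul_le_mul_of_nonneg_left h1 hL0.le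
          _ ≤ (m:ℝ)^q * g₂ x := h3
        -- put the pieces together
        have hbq0 : 0 ≤ ‖b‖ ^ q := Real.rpow_nonneg (norm_nonneg _) q
        have hstep : lam x * F x a b ≤ c₂ * (1 + M ^ γ) * lam x + c₂ * ((m:ℝ)^q * g₂ x) := by
          have h4 : lam x * F x a b ≤ lam x * (c₂ * (1 + |a| ^ γ + ‖b‖ ^ q)) :=
            mul_le_mul_of_nonneg_left hFg hL0.le
          have h5 : lam x * (c₂ * (1 + |a| ^ γ)) ≤ lam x * (c₂ * (1 + M ^ γ)) := by
            apply mul_le_mul_of_nonneg_left _ hL0.le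
            apply mul_le_mul_of_nonneg_left _ hc₂.le
            linarith
          have h6 : c₂ * (lam x * ‖b‖ ^ q) ≤ c₂ * ((m:ℝ)^q * g₂ x) :=
            mul_le_mul_of_nonneg_left hbq hc₂.le
          have h7 : lam x * (c₂ * (1 + |a| ^ γ + ‖b‖ ^ q)) =
              lam x * (c₂ * (1 + |a| ^ γ)) + c₂ * (lam x * ‖b‖ ^ q) := by ring
          have h8 : lam x * (c₂ * (1 + M ^ γ)) = c₂ * (1 + M ^ γ) * lam x := by ring
          linarith
        calc F x (φ x) (gradient φ x)
            ≤ (1 - lam x) * F x (u x) (gradient u x) + lam x * F x a b := hconv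
        _ ≤ (1 - lam x) * F x (u x) (gradient u x) + c₂ * (1 + M ^ γ) * lam x +
              c₂ * (m:ℝ)^q * g₂ x := by linarith
        _ = (1 - lam x) * f₀ x + c₂ * (1 + M ^ γ) * lam x + c₂ * (m:ℝ)^q * g₂ x := by
            simp only [hf₀]
    -- integrability facts on S
    have hSf₀ : IntegrableOn f₀ S volume := hFint.mono_set hSΩ
    have hlamcont : Continuous lam := (hηcont.pow m).mul (hgcont.comp hucont)
    have hlam_int : IntegrableOn lam S volume :=
      hlamcont.continuousOn.integrableOn_compact hScompact
    have hg₂int : IntegrableOn g₂ S volume :=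
      hg₂cont.continuousOn.integrableOn_compact hScompact
    have hlamf₀ : IntegrableOn (fun x => lam x * f₀ x) S volume :=
      Integrable.bdd_mul hSf₀ hlamcont.aestronglyMeasurable
        (c := 1) (Filter.Eventually.of_forall fun x => by
          rw [Real.norm_eq_abs, abs_of_nonneg (hlam01 x).1]; exact (hlam01 x).2)
    have h1int : Integrable (fun x => (1 - lam x) * f₀ x) (volume.restrict S) := by
      have heq : (fun x => (1 - lam x) * f₀ x) = fun x => f₀ x - lam x * f₀ x := by
        funext x; ring
      rw [heq]
      exact hSf₀.sub hlamf₀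
    -- minimality
    have hmain := hmin φ hφdiff hφψ hScompact hSΩ
    rw [← hS] at hmain
    have hstep2 : (∫ x in S, F x (φ x) (gradient φ x)) ≤
        ∫ x in S, ((1 - lam x) * f₀ x + c₂ * (1 + M ^ γ) * lam x + c₂ * (m:ℝ)^q * g₂ x) := by
      apply integral_mono_of_nonneg
      · exact Filter.Eventually.of_forall fun x =>
          le_trans (mul_nonneg hc₁.le (Real.rpow_nonneg (norm_nonneg _) p))
            (hFgrowth x (φ x) (gradient φ x)).1
      · exact (h1int.add (hlam_int.const_mul _)).add (hg₂int.const_mul _)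
      · exact Filter.Eventually.of_forall hstar
    have hsplit : (∫ x in S, ((1 - lam x) * f₀ x + c₂ * (1 + M ^ γ) * lam x +
          c₂ * (m:ℝ)^q * g₂ x)) =
        ((∫ x in S, f₀ x) - (∫ x in S, lam x * f₀ x)) +
          c₂ * (1 + M ^ γ) * (∫ x in S, lam x) + c₂ * (m:ℝ)^q * (∫ x in S, g₂ x) := by
      rw [integral_add (f := fun x => (1 - lam x) * f₀ x + c₂ * (1 + M ^ γ) * lam x)
        (g := fun x => c₂ * (m:ℝ)^q * g₂ x) (h1int.add (hlam_int.const_mul _))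
        (hg₂int.const_mul _),
        integral_add (f := fun x => (1 - lam x) * f₀ x)
        (g := fun x => c₂ * (1 + M ^ γ) * lam x) h1int (hlam_int.const_mul _)]
      rw [integral_const_mul, integral_const_mul]
      congr 2
      have heq : (fun x => (1 - lam x) * f₀ x) = fun x => f₀ x - lam x * f₀ x := by
        funext x; ring
      rw [heq, integral_sub hSf₀ hlamf₀]
    have hkey1 : (∫ x in S, lam x * f₀ x) ≤
        c₂ * (1 + M ^ γ) * (∫ x in S, lam x) + c₂ * (m:ℝ)^q * (∫ x in S, g₂ x) := by
      have h0 := le_trans hmain (le_trans hstep2 (le_of_eq hsplit))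
      linarith
    -- bound the lambda integral by the measure
    have hlamV : (∫ x in S, lam x) ≤ V := by
      rw [← integral_indicator hSmeas]
      have hle : ∀ x, S.indicator lam x ≤ AR.indicator (fun _ => (1:ℝ)) x := by
        intro x
        by_cases hxS : x ∈ S
        · rw [indicator_of_mem hxS]
          rcases (hlam01 x).1.eq_or_lt with h | h
          · rw [← h]
            exact indicator_nonneg (fun _ _ => zero_le_one) x
          · have he0 : η x ≠ 0 := by
              intro h0
              simp only [hlam, h0, zero_pow hm0, zero_mul] at h
              exact lt_irrefl 0 h
            have hgv : 0 < g (u x) := by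
              rcases (hgnn (u x)).eq_or_lt with h' | h'
              · exfalso
                simp only [hlam] at h
                rw [← h', mul_zero] at h
                exact lt_irrefl 0 h
              · exact h'
            have hxA : x ∈ AR := by
              refine ⟨hballtR (hηsupp (subset_tsupport η (Function.mem_support.2 he0))), ?_⟩
              have hc := hgpos _ hgv
              rw [hκ] at hc; linarith
            rw [indicator_of_mem hxA]
            exact (hlam01 x).2
        · rw [indicator_of_notMem hxS]
          exact indicator_nonneg (fun _ _ => zero_le_one) x
      have hmono := integral_mono (hlam_int.integrable_indicator hSmeas)
        ((integrableOn_const hARvol.ne).integrable_indicator (hAmeas R₀ k)) hle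
      rw [integral_indicator (hAmeas R₀ k)] at hmono
      rw [setIntegral_const, smul_eq_mul, mul_one] at hmono
      rw [hV]
      exact hmono
    -- bound the g₂ integral by I
    have hg₂I : (∫ x in S, g₂ x) ≤ I := by
      rw [← hIg₂, ← integral_indicator hSmeas, ← integral_indicator (hAmeas t k)]
      apply integral_mono (hg₂int.integrable_indicator hSmeas)
        (hg₂At.integrable_indicator (hAmeas t k))
      intro x
      by_cases hxS : x ∈ S
      · rw [indicator_of_mem hxS]
        by_cases hxA : x ∈ At
        · rw [indicator_of_mem hxA]
        · rw [indicator_of_notMem hxA]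
          have hxt : x ∈ ball x₀ t := hSball hxS
          have huk : ¬ k < u x := fun hc => hxA ⟨hxt, hc⟩
          have hmax : max (u x - k) 0 = 0 := max_eq_right (by linarith [not_lt.1 huk])
          simp [hg₂, hmax, Real.zero_rpow (by linarith : q ≠ 0)]
      · rw [indicator_of_notMem hxS]
        exact indicator_nonneg (fun y _ => hg₂nonneg y) x
    -- the set where the cutoff is 1 and the level exceeded by 2ε
    set B := {x | x ∈ ball x₀ s ∧ k + 2*ε < u x} with hB
    have hBmeas : MeasurableSet B := hAmeas s (k + 2*ε)
    have hBsub : B ⊆ S := by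
      intro x hx
      apply subset_tsupport
      rw [Function.mem_support]
      have hη1 : η x = 1 := hηs x hx.1
      have hx2 : k + 2*ε < u x := hx.2
      have hθpos : 0 < θ (u x) := by
        have h1 := hθge (u x) (show κ + ε ≤ u x by rw [hκ]; linarith)
        rw [hκ] at h1
        linarith
      have heq : φ x - u x = -(θ (u x)) := by
        simp [hφ, hη1]
      rw [heq]
      exact neg_ne_zero.2 (ne_of_gt hθpos)
    have hlamB : ∀ x ∈ B, lam x = 1 := by
      intro x hx
      have hη1 : η x = 1 := hηs x hx.1
      have hx2 : k + 2*ε < u x := hx.2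
      have hg1 : g (u x) = 1 :=
        hgone (u x) (show κ + ε ≤ u x by rw [hκ]; linarith)
      simp [hlam, hη1, hg1]
    have hBf₀ : IntegrableOn f₀ B volume :=
      hFint.mono_set (fun x hx => hballΩ (ball_subset_ball hstR hx.1))
    have hlower : (∫ x in B, f₀ x) ≤ ∫ x in S, lam x * f₀ x := by
      rw [← integral_indicator hBmeas, ← integral_indicator hSmeas]
      apply integral_mono (hBf₀.integrable_indicator hBmeas)
        (hlamf₀.integrable_indicator hSmeas)
      intro x
      by_cases hxB : x ∈ B
      · rw [indicator_of_mem hxB, indicator_of_mem (hBsub hxB), hlamB x hxB, one_mul]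
      · rw [indicator_of_notMem hxB]
        exact indicator_nonneg (fun y _ => mul_nonneg (hlam01 y).1 (hf₀nonneg y)) x
    calc (∫ x in B, f₀ x) ≤ ∫ x in S, lam x * f₀ x := hlower
    _ ≤ c₂ * (1 + M ^ γ) * (∫ x in S, lam x) + c₂ * (m:ℝ)^q * (∫ x in S, g₂ x) := hkey1
    _ ≤ c₂ * (1 + M ^ γ) * V + c₂ * (m:ℝ)^q * I := by
        have h1 := mul_le_mul_of_nonneg_left hlamV hC1
        have h2 := mul_le_mul_of_nonneg_left hg₂I hC2
        linarith
  -- pass to the limit ε → 0 along ε = 1/(j+1)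
  have hBsmeas : ∀ j : ℕ,
      MeasurableSet {x | x ∈ ball x₀ s ∧ k + 2*(1/((j:ℝ)+1)) < u x} :=
    fun j => hAmeas s _
  have hBsmono : Monotone (fun j : ℕ => {x | x ∈ ball x₀ s ∧ k + 2*(1/((j:ℝ)+1)) < u x}) := by
    intro i j hij x hx
    refine ⟨hx.1, lt_of_le_of_lt ?_ hx.2⟩
    have hcast : ((i:ℝ)+1) ≤ ((j:ℝ)+1) := by
      have : (i:ℝ) ≤ (j:ℝ) := Nat.cast_le.2 hij
      linarith
    have h1 : (1:ℝ)/((j:ℝ)+1) ≤ 1/((i:ℝ)+1) :=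
      one_div_le_one_div_of_le (by positivity) hcast
    linarith
  have hBsunion : (⋃ j : ℕ, {x | x ∈ ball x₀ s ∧ k + 2*(1/((j:ℝ)+1)) < u x}) = As := by
    ext x
    simp only [mem_iUnion, mem_setOf_eq, hAs]
    constructor
    · rintro ⟨j, hx1, hx2⟩
      refine ⟨hx1, lt_of_le_of_lt ?_ hx2⟩
      have hpos : (0:ℝ) < 1/((j:ℝ)+1) := by positivity
      linarith
    · rintro ⟨hx1, hx2⟩
      obtain ⟨j, hj⟩ := exists_nat_one_div_lt (show (0:ℝ) < (u x - k)/2 by linarith)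
      exact ⟨j, hx1, by linarith⟩
  have hAsΩ : As ⊆ Ω := fun x hx => hballΩ (ball_subset_ball hstR hx.1)
  have htend := tendsto_setIntegral_of_monotone hBsmeas hBsmono
    (by rw [hBsunion]; exact (hFint.mono_set hAsΩ : IntegrableOn f₀ As volume))
  rw [hBsunion] at htend
  have hAsbound : (∫ x in As, f₀ x) ≤ c₂ * (1 + M ^ γ) * V + c₂ * (m:ℝ)^q * I :=
    le_of_tendsto htend (Filter.Eventually.of_forall fun j =>
      key (1/((j:ℝ)+1)) (by positivity))
  -- final assembly
  have hT1 : 0 ≤ ∫ x in At \ As, f₀ x :=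
    setIntegral_nonneg ((hAmeas t k).diff (hAmeas s k)) (fun x _ => hf₀nonneg x)
  have hkq : (1:ℝ) ≤ k ^ q := Real.one_le_rpow hk hq0
  have hCk : c₂ * (1 + M ^ γ) ≤ (c₂ * (1 + M ^ γ) + c₂ * (m:ℝ) ^ q + 1) * k ^ q := by
    calc c₂ * (1 + M ^ γ) ≤ c₂ * (1 + M ^ γ) + c₂ * (m:ℝ) ^ q + 1 := by linarith
    _ = (c₂ * (1 + M ^ γ) + c₂ * (m:ℝ) ^ q + 1) * 1 := (mul_one _).symm
    _ ≤ (c₂ * (1 + M ^ γ) + c₂ * (m:ℝ) ^ q + 1) * k ^ q :=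
        mul_le_mul_of_nonneg_left hkq (by linarith)
  have h1 : c₂ * (1 + M ^ γ) * V ≤
      (c₂ * (1 + M ^ γ) + c₂ * (m:ℝ) ^ q + 1) * k ^ q * V :=
    mul_le_mul_of_nonneg_right hCk hV0
  have h2 : c₂ * (m:ℝ)^q * I ≤ (c₂ * (1 + M ^ γ) + c₂ * (m:ℝ) ^ q + 1) * I :=
    mul_le_mul_of_nonneg_right (by linarith) hI0
  linarith
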